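/- There exists an absolute constant C > 0 such that for every (r, s) ∈ Π with r² + s² = 1 and every (r̄, s̄) ∈ Π with D := (r − r̄)² + (s − s̄)² ≥ 1/64, the following hold: (i) |F^r(r, s, r̄, s̄)| ≤ C · D^{−1}; (ii) if moreover r̄ ≤ r + 2 and s̄ ≤ s + 2, then |F^r(r, s, r̄, s̄)| ≤ C · D^{−3}; (iii) if exactly one of the inequalities r̄ > r + 2, s̄ > s + 2 holds, then |F^r(r, s, r̄, s̄)| ≤ C · D^{−2}. -/

import Mathlib

open MeasureTheory Real

/-- `X₋₋(r,s,r̄,s̄,θ̄,φ̄) = (r−r̄)² + (s−s̄)² + 2rr̄(1−cos θ̄) + 2ss̄(1−cos φ̄)`. -/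
noncomputable def Xmm (r s rb sb θ φ : ℝ) : ℝ :=
  (r - rb) ^ 2 + (s - sb) ^ 2 + 2 * r * rb * (1 - Real.cos θ) + 2 * s * sb * (1 - Real.cos φ)

/-- The Biot–Savart kernel `F^r` of the bi-rotational Euler flow:
`F^r(r,s,r̄,s̄) = (2/π²) ∫₀^π ∫₀^π r̄ s̄ cos θ̄ (s̄ − s cos φ̄) X₋₋^{−2} dφ̄ dθ̄`. -/
noncomputable def Fr (r s rb sb : ℝ) : ℝ :=
  (2 / Real.pi ^ 2) * ∫ θ in (0:ℝ)..Real.pi, ∫ φ in (0:ℝ)..Real.pi,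
    rb * sb * Real.cos θ * (sb - s * Real.cos φ) / (Xmm r s rb sb θ φ) ^ 2

/-!
Since `∫₀^π cos θ̄ dθ̄ = 0`, one may subtract from the integrand of `F^r` the function
`cos θ̄ · g(φ̄)` obtained by evaluating `X₋₋` at `θ̄ = 0`. Writing `D = (r−r̄)² + (s−s̄)²`,
we have `X₋₋ ≥ D` and `X₋₋(θ̄) − X₋₋(0) = 2rr̄(1 − cos θ̄) ≤ 4rr̄`, so the difference is
`O(r r̄² s̄ (s̄ + s) / D³)` pointwise, and hence so is `F^r`. On the unit circle with
`D ≥ 1/64` we have `r̄, s̄ ≤ 1 + √D ≤ 9√D`, and bounding each of `r̄`, `s̄` by either `3` or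
`9√D`, according to the case, gives the three decay rates.
-/

open Function intervalIntegral

lemma Xmm_eq_Xmm_zero_add (r s rb sb θ φ : ℝ) :
    Xmm r s rb sb θ φ = Xmm r s rb sb 0 φ + 2 * r * rb * (1 - cos θ) := by
  simp only [Xmm, cos_zero]
  ring

lemma sq_add_sq_le_Xmm {r s rb sb : ℝ} (hr : 0 ≤ r) (hs : 0 ≤ s) (hrb : 0 ≤ rb) (hsb : 0 ≤ sb)
    (θ φ : ℝ) : (r - rb) ^ 2 + (s - sb) ^ 2 ≤ Xmm r s rb sb θ φ := by
  have hθ : 0 ≤ 2 * r * rb * (1 - cos θ) := mul_nonneg (by positivity) (by simp [cos_le_one])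
  have hφ : 0 ≤ 2 * s * sb * (1 - cos φ) := mul_nonneg (by positivity) (by simp [cos_le_one])
  unfold Xmm
  linarith

lemma abs_one_div_sq_sub_one_div_sq_le {a c : ℝ} (ha : 0 < a) (hc : 0 ≤ c) :
    |1 / (a + c) ^ 2 - 1 / a ^ 2| ≤ 2 * c / a ^ 3 := by
  have hac : 0 < a + c := by linarith
  have hle : 1 / (a + c) ^ 2 ≤ 1 / a ^ 2 := by gcongr; linarith
  rw [abs_of_nonpos (by linarith), neg_sub, div_sub_div _ _ (by positivity) (by positivity),
    div_le_div_iff₀ (by positivity) (by positivity)]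
  nlinarith [mul_nonneg (mul_nonneg (pow_nonneg ha.le 3) hc) hc,
    mul_nonneg (mul_nonneg (mul_nonneg (sq_nonneg a) hc) hc) hc]

lemma integral_integral_eq_integral_integral_sub_cos_mul {f : ℝ → ℝ → ℝ} {g : ℝ → ℝ}
    (hf : Continuous (uncurry f)) (hg : Continuous g) :
    ∫ θ in (0:ℝ)..π, ∫ φ in (0:ℝ)..π, f θ φ =
      ∫ θ in (0:ℝ)..π, ∫ φ in (0:ℝ)..π, (f θ φ - cos θ * g φ) := by
  have hfθ : ∀ θ, Continuous (f θ) := fun θ => hf.comp (Continuous.prodMk_right θ)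
  have hF : Continuous fun θ => ∫ φ in (0:ℝ)..π, f θ φ :=
    continuous_parametric_intervalIntegral_of_continuous' hf 0 π
  have hinner : ∀ θ, ∫ φ in (0:ℝ)..π, (f θ φ - cos θ * g φ) =
      (∫ φ in (0:ℝ)..π, f θ φ) - cos θ * ∫ φ in (0:ℝ)..π, g φ := fun θ => by
    rw [integral_sub (g := fun φ => cos θ * g φ) ((hfθ θ).intervalIntegrable _ _)
      ((continuous_const.mul hg).intervalIntegrable _ _), intervalIntegral.integral_const_mul]
  simp_rw [hinner]
  rw [integral_sub (hF.intervalIntegrable _ _) (by apply Continuous.intervalIntegrable; fun_prop),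
    intervalIntegral.integral_mul_const, integral_cos]
  simp

lemma le_add_sqrt_of_sq_sub_le {x y D : ℝ} (h : (x - y) ^ 2 ≤ D) : y ≤ x + √D := by
  linarith [neg_abs_le (x - y), abs_le_sqrt h]

lemma abs_integral_integral_le {h : ℝ → ℝ → ℝ} {M a b c d : ℝ} (hM : ∀ θ φ, |h θ φ| ≤ M) :
    |∫ θ in a..b, ∫ φ in c..d, h θ φ| ≤ M * |d - c| * |b - a| := by
  simpa only [Real.norm_eq_abs] using norm_integral_le_of_norm_le_const fun θ _ =>
    norm_integral_le_of_norm_le_const (f := h θ) fun φ _ =>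
      (Real.norm_eq_abs _).trans_le (hM θ φ)

section Kernel

variable {r s rb sb : ℝ}

lemma abs_integrand_sub_cos_mul_le (hr : 0 ≤ r) (hs : 0 ≤ s) (hrb : 0 ≤ rb) (hsb : 0 ≤ sb)
    (hD : 0 < (r - rb) ^ 2 + (s - sb) ^ 2) (θ φ : ℝ) :
    |rb * sb * cos θ * (sb - s * cos φ) / Xmm r s rb sb θ φ ^ 2 -
        cos θ * (rb * sb * (sb - s * cos φ) / Xmm r s rb sb 0 φ ^ 2)| ≤
      8 * r * rb ^ 2 * sb * (sb + s) / ((r - rb) ^ 2 + (s - sb) ^ 2) ^ 3 := by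
  set D := (r - rb) ^ 2 + (s - sb) ^ 2
  set a := Xmm r s rb sb 0 φ
  set c := 2 * r * rb * (1 - cos θ)
  have ha : D ≤ a := sq_add_sq_le_Xmm hr hs hrb hsb 0 φ
  have hc : 0 ≤ c := mul_nonneg (by positivity) (by simp [cos_le_one])
  have hc4 : c ≤ 4 * r * rb := by nlinarith [neg_one_le_cos θ, mul_nonneg hr hrb]
  have hnum : |rb * sb * cos θ * (sb - s * cos φ)| ≤ rb * sb * (sb + s) := by
    have hcosθ : |cos θ| ≤ 1 := abs_cos_le_one θ
    have hdiff : |sb - s * cos φ| ≤ sb + s :=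
      abs_le.mpr ⟨by nlinarith [cos_le_one φ], by nlinarith [neg_one_le_cos φ]⟩
    rw [abs_mul, abs_mul, abs_of_nonneg (by positivity : 0 ≤ rb * sb)]
    calc rb * sb * |cos θ| * |sb - s * cos φ| ≤ rb * sb * 1 * (sb + s) := by gcongr
      _ = rb * sb * (sb + s) := by ring
  have hinv : |1 / (a + c) ^ 2 - 1 / a ^ 2| ≤ 8 * r * rb / D ^ 3 :=
    calc _ ≤ 2 * c / a ^ 3 := abs_one_div_sq_sub_one_div_sq_le (hD.trans_le ha) hc
      _ ≤ 8 * r * rb / D ^ 3 :=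
          div_le_div₀ (by positivity) (by linarith) (by positivity) (by gcongr)
  rw [show Xmm r s rb sb θ φ = a + c from Xmm_eq_Xmm_zero_add r s rb sb θ φ]
  calc _ = |rb * sb * cos θ * (sb - s * cos φ)| * |1 / (a + c) ^ 2 - 1 / a ^ 2| := by
        rw [← abs_mul]; congr 1; ring
    _ ≤ rb * sb * (sb + s) * (8 * r * rb / D ^ 3) :=
        mul_le_mul hnum hinv (abs_nonneg _) (by positivity)
    _ = 8 * r * rb ^ 2 * sb * (sb + s) / D ^ 3 := by ring

lemma abs_Fr_le (hr : 0 ≤ r) (hs : 0 ≤ s) (hrb : 0 ≤ rb) (hsb : 0 ≤ sb)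
    (hD : 0 < (r - rb) ^ 2 + (s - sb) ^ 2) :
    |Fr r s rb sb| ≤ 16 * r * rb ^ 2 * sb * (sb + s) / ((r - rb) ^ 2 + (s - sb) ^ 2) ^ 3 := by
  have hX : ∀ θ φ, Xmm r s rb sb θ φ ^ 2 ≠ 0 := fun θ φ =>
    (pow_pos (hD.trans_le (sq_add_sq_le_Xmm hr hs hrb hsb θ φ)) 2).ne'
  have hf : Continuous (uncurry fun θ φ =>
      rb * sb * cos θ * (sb - s * cos φ) / Xmm r s rb sb θ φ ^ 2) :=
    Continuous.div (by fun_prop) (by unfold Xmm; fun_prop) fun p => hX p.1 p.2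
  have hg : Continuous fun φ => rb * sb * (sb - s * cos φ) / Xmm r s rb sb 0 φ ^ 2 :=
    Continuous.div (by fun_prop) (by unfold Xmm; fun_prop) (hX 0)
  rw [Fr, integral_integral_eq_integral_integral_sub_cos_mul hf hg, abs_mul,
    abs_of_pos (by positivity)]
  calc _ ≤ 2 / π ^ 2 * (8 * r * rb ^ 2 * sb * (sb + s) / ((r - rb) ^ 2 + (s - sb) ^ 2) ^ 3 *
        |π - 0| * |π - 0|) := by
        gcongr
        exact abs_integral_integral_le (abs_integrand_sub_cos_mul_le hr hs hrb hsb hD)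
    _ = _ := by
        rw [sub_zero, abs_of_pos pi_pos]
        field_simp
        ring

lemma abs_Fr_le_of_le {R S T : ℝ} (hr : 0 ≤ r) (hr1 : r ≤ 1) (hs : 0 ≤ s) (hrb : 0 ≤ rb)
    (hsb : 0 ≤ sb) (hR : rb ≤ R) (hS : sb ≤ S) (hT : sb + s ≤ T)
    (hD : 0 < (r - rb) ^ 2 + (s - sb) ^ 2) :
    |Fr r s rb sb| ≤ 16 * R ^ 2 * S * T / ((r - rb) ^ 2 + (s - sb) ^ 2) ^ 3 := by
  refine (abs_Fr_le hr hs hrb hsb hD).trans (div_le_div_of_nonneg_right ?_ (by positivity))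
  have hR2S : 0 ≤ R ^ 2 * S := mul_nonneg (sq_nonneg R) (hsb.trans hS)
  calc 16 * r * rb ^ 2 * sb * (sb + s) ≤ 16 * 1 * R ^ 2 * S * T := by
        gcongr; linarith
    _ = 16 * R ^ 2 * S * T := by ring

end Kernel

/-- There is an absolute constant `C > 0` such that for every `(r,s) ∈ Π`
with `r² + s² = 1` and every `(r̄,s̄) ∈ Π` with `D := (r−r̄)² + (s−s̄)² ≥ 1/64`:
(i) `|F^r| ≤ C·D^{−1}`; (ii) if `r̄ ≤ r+2` and `s̄ ≤ s+2` then `|F^r| ≤ C·D^{−3}`;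
(iii) if exactly one of `r̄ > r+2`, `s̄ > s+2` holds, then `|F^r| ≤ C·D^{−2}`. -/
theorem stmt_4 :
    ∃ C : ℝ, 0 < C ∧ ∀ r s rb sb : ℝ, 0 ≤ r → 0 ≤ s → r ^ 2 + s ^ 2 = 1 →
      0 ≤ rb → 0 ≤ sb → 1 / 64 ≤ (r - rb) ^ 2 + (s - sb) ^ 2 →
      (|Fr r s rb sb| ≤ C / ((r - rb) ^ 2 + (s - sb) ^ 2)) ∧
      (rb ≤ r + 2 → sb ≤ s + 2 →
        |Fr r s rb sb| ≤ C / ((r - rb) ^ 2 + (s - sb) ^ 2) ^ 3) ∧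
      ((r + 2 < rb ∧ sb ≤ s + 2) ∨ (rb ≤ r + 2 ∧ s + 2 < sb) →
        |Fr r s rb sb| ≤ C / ((r - rb) ^ 2 + (s - sb) ^ 2) ^ 2) := by
  refine ⟨198288, by norm_num, fun r s rb sb hr hs hrs hrb hsb hD => ?_⟩
  set D := (r - rb) ^ 2 + (s - sb) ^ 2
  have hD0 : 0 < D := by linarith
  have hr1 : r ≤ 1 := by nlinarith
  have hs1 : s ≤ 1 := by nlinarith
  set u := √D
  have hDu : D = u ^ 2 := (sq_sqrt hD0.le).symm
  have hu : 1 ≤ 8 * u := by nlinarith [sqrt_nonneg D]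
  have hrbu : rb ≤ 9 * u := by
    linarith [le_add_sqrt_of_sq_sub_le (le_add_of_nonneg_right (sq_nonneg (s - sb)) : _ ≤ D)]
  have hsbu : sb ≤ 9 * u := by
    linarith [le_add_sqrt_of_sq_sub_le (le_add_of_nonneg_left (sq_nonneg (r - rb)) : _ ≤ D)]
  refine ⟨?_, fun hrb2 hsb2 => ?_, ?_⟩
  · calc |Fr r s rb sb| ≤ 16 * (9 * u) ^ 2 * (9 * u) * (17 * u) / D ^ 3 :=
          abs_Fr_le_of_le hr hr1 hs hrb hsb hrbu hsbu (by linarith) hD0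
      _ = 198288 / D := by rw [hDu]; field_simp; ring
  · calc |Fr r s rb sb| ≤ 16 * 3 ^ 2 * 3 * 4 / D ^ 3 :=
          abs_Fr_le_of_le hr hr1 hs hrb hsb (by linarith) (by linarith) (by linarith) hD0
      _ ≤ 198288 / D ^ 3 := by gcongr; norm_num
  · rintro (⟨-, hsb2⟩ | ⟨hrb2, -⟩)
    · calc |Fr r s rb sb| ≤ 16 * (9 * u) ^ 2 * 3 * 4 / D ^ 3 :=
          abs_Fr_le_of_le hr hr1 hs hrb hsb hrbu (by linarith) (by linarith) hD0
        _ = 15552 / D ^ 2 := by rw [hDu]; field_simp; ring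
        _ ≤ 198288 / D ^ 2 := by gcongr; norm_num
    · calc |Fr r s rb sb| ≤ 16 * 3 ^ 2 * (9 * u) * (17 * u) / D ^ 3 :=
          abs_Fr_le_of_le hr hr1 hs hrb hsb (by linarith) hsbu (by linarith) hD0
        _ = 22032 / D ^ 2 := by rw [hDu]; field_simp; ring
        _ ≤ 198288 / D ^ 2 := by gcongr; norm_num
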